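/- arXiv:1802.05064 — 4 statements merged into one kernel-verified Lean document; each statement's English description precedes it below -/
import Mathlib

section
/- Let $h: [0,\infty) \to [0,1]$ be a non-increasing function satisfying $h(x)^d = \int_x^\infty h(u)\,du$ for all $x \ge 0$, where $d \ge 2$ is an integer, and $h(0) = 1$. Then $h(x) = (1 - \frac{d-1}{d}x)^{1/(d-1)}$ for $x \in [0, d/(d-1)]$ and $h(x) = 0$ for $x \ge d/(d-1)$. -/
open MeasureTheory Set Filter Topology

/-! The tail integral `G x = ∫_x^∞ h = h x ^ d` is continuous with right derivative
`-h = -G ^ (1/d)`, so `h` is continuous on `[0, ∞)` and, as long as `h > 0`, the quantity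
`G ^ (1 - 1/d) + (1 - 1/d) x = h ^ (d-1) + (d-1)/d · x` is constant, equal to its value `1` at `0`.
Hence `h x > 0` forces `x < d/(d-1)`. Conversely `h` cannot vanish at some `x < d/(d-1)`: on
`[0, x]` its positive values are at least `(1 - (d-1)/d · x)^{1/(d-1)} > 0`, and a continuous
function starting at `h 0 = 1` cannot skip the values in between. -/

section TailIntegral

variable {f : ℝ → ℝ} {a x : ℝ}

lemma integral_Ioi_eq_sub_intervalIntegral (hf : IntegrableOn f (Ioi a)) (hx : a ≤ x) :
    ∫ t in Ioi x, f t = (∫ t in Ioi a, f t) - ∫ t in a..x, f t := by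
  linarith [intervalIntegral.integral_Ioi_sub_Ioi hf hx]

lemma continuousOn_integral_Ioi (hf : IntegrableOn f (Ioi a)) :
    ContinuousOn (fun x => ∫ t in Ioi x, f t) (Ici a) := by
  intro x hx
  have hprim : ContinuousWithinAt (fun y => ∫ t in a..y, f t) (Icc a (x + 1)) x := by
    refine intervalIntegral.continuousWithinAt_primitive Real.volume_singleton ?_
    rw [min_self, max_eq_right (by linarith [mem_Ici.1 hx])]
    exact (intervalIntegrable_iff_integrableOn_Ioc_of_le (by linarith [mem_Ici.1 hx])).2
      (hf.mono_set Ioc_subset_Ioi_self)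
  have hnhds : Icc a (x + 1) ∈ 𝓝[Ici a] x := by
    rw [← Ici_inter_Iic]
    exact inter_mem_nhdsWithin _ (Iic_mem_nhds (by linarith))
  refine ((continuousWithinAt_const.sub hprim).mono_of_mem_nhdsWithin hnhds).congr
    (fun y hy => integral_Ioi_eq_sub_intervalIntegral hf hy)
    (integral_Ioi_eq_sub_intervalIntegral hf hx)

lemma hasDerivWithinAt_integral_Ioi (hf : IntegrableOn f (Ioi a)) (hx : a ≤ x)
    (hcont : ContinuousWithinAt f (Ioi x) x) :
    HasDerivWithinAt (fun y => ∫ t in Ioi y, f t) (-f x) (Ici x) x := by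
  have hint : IntervalIntegrable f volume a x :=
    (intervalIntegrable_iff_integrableOn_Ioc_of_le hx).2 (hf.mono_set Ioc_subset_Ioi_self)
  have hmeas : StronglyMeasurableAtFilter f (𝓝[>] x) :=
    AEStronglyMeasurable.stronglyMeasurableAtFilter_of_mem
      (hf.mono_set (Ioi_subset_Ioi hx)).aestronglyMeasurable self_mem_nhdsWithin
  have hprim := intervalIntegral.integral_hasDerivWithinAt_right (s := Ici x) hint hmeas hcont
  refine (hprim.const_sub (∫ t in Ioi a, f t)).congr
    (fun y hy => integral_Ioi_eq_sub_intervalIntegral hf (hx.trans hy))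
    (integral_Ioi_eq_sub_intervalIntegral hf hx)

end TailIntegral

lemma rpow_one_sub_add_mul_eq_of_hasDerivWithinAt {G : ℝ → ℝ} {r a b : ℝ}
    (hcont : ContinuousOn G (Icc a b)) (hpos : ∀ x ∈ Icc a b, 0 < G x)
    (hderiv : ∀ x ∈ Ico a b, HasDerivWithinAt G (-G x ^ r) (Ici x) x) :
    ∀ x ∈ Icc a b, G x ^ (1 - r) + (1 - r) * x = G a ^ (1 - r) + (1 - r) * a := by
  refine constant_of_has_deriv_right_zero ?_ fun x hx => ?_
  · exact (hcont.rpow_const fun x hx => Or.inl (hpos x hx).ne').add (by fun_prop)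
  · have hGx := hpos x (Ico_subset_Icc_self hx)
    have hpow := ((hderiv x hx).rpow_const (p := 1 - r) (Or.inl hGx.ne')).add
      ((hasDerivWithinAt_id x (Ici x)).const_mul (1 - r))
    have hcancel : -G x ^ r * (1 - r) * G x ^ (1 - r - 1) + (1 - r) * 1 = 0 := by
      rw [sub_sub_cancel_left, neg_mul, neg_mul, mul_right_comm, ← Real.rpow_add hGx]
      simp
    rw [hcancel] at hpow
    exact hpow

lemma ContinuousOn.pos_of_forall_pos_imp_le {α : Type*} [ConditionallyCompleteLinearOrder α]
    [TopologicalSpace α] [OrderTopology α] [DenselyOrdered α] {f : α → ℝ} {a b : α} {c : ℝ}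
    (hab : a ≤ b) (hf : ContinuousOn f (Icc a b)) (ha : 0 < f a) (hc : 0 < c)
    (hgap : ∀ y ∈ Icc a b, 0 < f y → c ≤ f y) : 0 < f b := by
  by_contra! hb
  have hca : c ≤ f a := hgap a (left_mem_Icc.2 hab) ha
  obtain ⟨y, hy, hfy⟩ := intermediate_value_Icc' hab hf
    ⟨hb.trans (half_pos hc).le, (half_le_self hc.le).trans hca⟩
  linarith [hgap y hy (hfy ▸ half_pos hc)]

section SurvivalEquation

variable {d : ℕ} {h : ℝ → ℝ}

lemma integrableOn_Ioi_of_pow_eq_integral (h0 : h 0 = 1)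
    (heq : ∀ x, 0 ≤ x → h x ^ d = ∫ u in Ioi x, h u) : IntegrableOn h (Ioi 0) :=
  Integrable.of_integral_ne_zero (by rw [← heq 0 le_rfl, h0, one_pow]; exact one_ne_zero)

lemma eq_integral_Ioi_rpow_of_pow_eq_integral (hd : d ≠ 0) (hnn : ∀ x, 0 ≤ x → 0 ≤ h x)
    (heq : ∀ x, 0 ≤ x → h x ^ d = ∫ u in Ioi x, h u) {x : ℝ} (hx : 0 ≤ x) :
    h x = (∫ u in Ioi x, h u) ^ (d⁻¹ : ℝ) := by
  rw [← heq x hx, Real.pow_rpow_inv_natCast (hnn x hx) hd]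

lemma continuousOn_of_pow_eq_integral (hd : d ≠ 0) (hnn : ∀ x, 0 ≤ x → 0 ≤ h x) (h0 : h 0 = 1)
    (heq : ∀ x, 0 ≤ x → h x ^ d = ∫ u in Ioi x, h u) : ContinuousOn h (Ici 0) := by
  refine ((continuousOn_integral_Ioi (integrableOn_Ioi_of_pow_eq_integral h0 heq)).rpow_const
    (p := (d⁻¹ : ℝ)) fun _ _ => Or.inr (by positivity)).congr fun x hx => ?_
  exact eq_integral_Ioi_rpow_of_pow_eq_integral hd hnn heq hx

lemma rpow_sub_one_eq_of_pow_eq_integral (hd : d ≠ 0) (hnn : ∀ x, 0 ≤ x → 0 ≤ h x)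
    (h0 : h 0 = 1)
    (heq : ∀ x, 0 ≤ x → h x ^ d = ∫ u in Ioi x, h u) {b : ℝ} (hb : 0 ≤ b) (hhb : 0 < h b) :
    h b ^ ((d : ℝ) - 1) = 1 - (d - 1) / d * b := by
  have hint := integrableOn_Ioi_of_pow_eq_integral h0 heq
  have hcont := continuousOn_of_pow_eq_integral hd hnn h0 heq
  have hpos : ∀ x ∈ Icc 0 b, 0 < ∫ u in Ioi x, h u := fun x hx =>
    (heq b hb ▸ pow_pos hhb d).trans_le <| setIntegral_mono_set
      (hint.mono_set (Ioi_subset_Ioi hx.1))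
      (ae_restrict_of_forall_mem measurableSet_Ioi fun u hu => hnn u (hx.1.trans hu.le))
      (Ioi_subset_Ioi hx.2).eventuallyLE
  have hderiv : ∀ x ∈ Ico 0 b, HasDerivWithinAt (fun y => ∫ u in Ioi y, h u)
      (-(∫ u in Ioi x, h u) ^ (d⁻¹ : ℝ)) (Ici x) x := by
    intro x hx
    rw [← eq_integral_Ioi_rpow_of_pow_eq_integral hd hnn heq hx.1]
    exact hasDerivWithinAt_integral_Ioi hint hx.1 ((hcont x hx.1).mono (Ioi_subset_Ici hx.1))
  have hconst := rpow_one_sub_add_mul_eq_of_hasDerivWithinAt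
    ((continuousOn_integral_Ioi hint).mono Icc_subset_Ici_self) hpos hderiv b ⟨hb, le_rfl⟩
  have hexp : (d : ℝ) * (1 - (d : ℝ)⁻¹) = d - 1 := by field_simp
  have hcoef : ((d : ℝ) - 1) / d = 1 - (d : ℝ)⁻¹ := by field_simp
  rw [← heq b hb, ← heq 0 le_rfl, h0, one_pow, Real.one_rpow, ← Real.rpow_natCast,
    ← Real.rpow_mul (hnn b hb), hexp] at hconst
  rw [hcoef]
  linarith

lemma eq_rpow_of_pow_eq_integral (hd : 2 ≤ d) (hnn : ∀ x, 0 ≤ x → 0 ≤ h x) (h0 : h 0 = 1)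
    (heq : ∀ x, 0 ≤ x → h x ^ d = ∫ u in Ioi x, h u) {b : ℝ} (hb : 0 ≤ b) (hhb : 0 < h b) :
    h b = (1 - (d - 1) / d * b) ^ ((1 : ℝ) / (d - 1)) := by
  have hd1 : (1 : ℝ) < d := by exact_mod_cast hd
  rw [← rpow_sub_one_eq_of_pow_eq_integral (by omega) hnn h0 heq hb hhb,
    ← Real.rpow_mul (hnn b hb), mul_one_div_cancel (sub_pos.2 hd1).ne', Real.rpow_one]

lemma pos_of_pow_eq_integral (hd : 2 ≤ d) (hnn : ∀ x, 0 ≤ x → 0 ≤ h x) (h0 : h 0 = 1)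
    (heq : ∀ x, 0 ≤ x → h x ^ d = ∫ u in Ioi x, h u) {x : ℝ} (hx : 0 ≤ x)
    (hpos : 0 < 1 - (d - 1) / d * x) : 0 < h x := by
  have hd1 : (1 : ℝ) < d := by exact_mod_cast hd
  have hcoef : (0 : ℝ) ≤ (d - 1) / d := by positivity
  refine ((continuousOn_of_pow_eq_integral (by omega) hnn h0 heq).mono Icc_subset_Ici_self)
    |>.pos_of_forall_pos_imp_le hx (h0 ▸ one_pos)
    (Real.rpow_pos_of_pos hpos ((1 : ℝ) / (d - 1)))
    fun y hy hhy => ?_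
  rw [eq_rpow_of_pow_eq_integral hd hnn h0 heq hy.1 hhy]
  exact Real.rpow_le_rpow hpos.le (sub_le_sub_left (mul_le_mul_of_nonneg_left hy.2 hcoef) 1)
    (div_nonneg zero_le_one (sub_pos.2 hd1).le)

end SurvivalEquation

theorem survival_integral_equation_unique_general (d : ℕ) (hd : 2 ≤ d) (h : ℝ → ℝ)
    (hrange : ∀ x, 0 ≤ x → h x ∈ Set.Icc (0 : ℝ) 1)
    (h0 : h 0 = 1)
    (heq : ∀ x, 0 ≤ x → (h x) ^ d = ∫ u in Set.Ioi x, h u) :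
    (∀ x : ℝ, x ∈ Set.Icc 0 ((d : ℝ) / (d - 1)) →
        h x = (1 - (d - 1) / d * x) ^ ((1 : ℝ) / (d - 1))) ∧
    (∀ x : ℝ, (d : ℝ) / (d - 1) ≤ x → h x = 0) := by
  have hnn : ∀ x, 0 ≤ x → 0 ≤ h x := fun x hx => (hrange x hx).1
  have hd1 : (1 : ℝ) < d := by exact_mod_cast hd
  have hfactor : ∀ x : ℝ, 1 - (d - 1) / d * x = (d - 1) / d * (d / (d - 1) - x) := by
    intro x
    field_simp [(sub_pos.2 hd1).ne']
  have hT : (0 : ℝ) ≤ d / (d - 1) := by positivity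
  have hzero : ∀ x : ℝ, d / (d - 1) ≤ x → h x = 0 := by
    intro x hx
    refine le_antisymm (not_lt.1 fun hpos => ?_) (hnn x (hT.trans hx))
    have hval := rpow_sub_one_eq_of_pow_eq_integral (by omega) hnn h0 heq (hT.trans hx) hpos
    have hneg : (d - 1) / d * (d / (d - 1) - x) ≤ 0 :=
      mul_nonpos_of_nonneg_of_nonpos (by positivity) (by linarith)
    linarith [Real.rpow_pos_of_pos hpos ((d : ℝ) - 1), hfactor x]
  refine ⟨fun x hx => ?_, hzero⟩
  rcases hx.2.lt_or_eq with hlt | rfl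
  · refine eq_rpow_of_pow_eq_integral hd hnn h0 heq hx.1
      (pos_of_pow_eq_integral hd hnn h0 heq hx.1 ?_)
    rw [hfactor]
    exact mul_pos (by positivity) (by linarith)
  · rw [hzero _ le_rfl, hfactor, sub_self, mul_zero,
      Real.zero_rpow (one_div_ne_zero (sub_pos.2 hd1).ne')]

/-- If `h : [0,∞) → [0,1]` is non-increasing with `h 0 = 1` and
`h(x)^d = ∫_x^∞ h(u) du`, then `h(x) = (1 - (d-1)/d · x)^{1/(d-1)}` on
`[0, d/(d-1)]` and `h = 0` beyond `d/(d-1)`. -/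
theorem survival_integral_equation_unique (d : ℕ) (hd : 2 ≤ d) (h : ℝ → ℝ)
    (hrange : ∀ x, 0 ≤ x → h x ∈ Set.Icc (0 : ℝ) 1)
    (hanti : ∀ x y, 0 ≤ x → x ≤ y → h y ≤ h x)
    (h0 : h 0 = 1)
    (heq : ∀ x, 0 ≤ x → (h x) ^ d = ∫ u in Set.Ioi x, h u) :
    (∀ x : ℝ, x ∈ Set.Icc 0 ((d : ℝ) / (d - 1)) →
        h x = (1 - (d - 1) / d * x) ^ ((1 : ℝ) / (d - 1))) ∧
    (∀ x : ℝ, (d : ℝ) / (d - 1) ≤ x → h x = 0) :=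
  survival_integral_equation_unique_general d hd h hrange h0 heq
end

section
/- Let $\Psi$ be a bounded nonnegative function on $M_1(\mathbb{N}) \times \mathbb{N}$ satisfying $|\Psi(\sigma,l)-\Psi(\sigma',l)| \le D_\Psi\|\sigma-\sigma'\|_{tv}$, and define for $\sigma \in M_1(\mathbb{N})$ the operator $\Omega_\sigma(f)(x) = \beta\Psi(\sigma,x)(f(x+1)-f(x)) + (f(0)-f(x))$. Then for any $f: \mathbb{N}\to\mathbb{R}$ with $\|\nabla_1 f\|_\infty = \sup_x|f(x+1)-f(x)| < \infty$, and any $\sigma, \sigma' \in M_1(\mathbb{N})$ for which $f$ is integrable: $|\langle\sigma, \Omega_\sigma f\rangle - \langle\sigma', \Omega_{\sigma'} f\rangle| \le 2\beta\|\nabla_1 f\|_\infty(\|\Psi\|_\infty + D_\Psi)\|\sigma-\sigma'\|_{tv} + |\langle\sigma - \sigma', f\rangle|$. -/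
/-!
Split the difference as `⟨σ, Ω_σ f - Ω_{σ'} f⟩ + ⟨σ - σ', Ω_{σ'} f⟩`. In the first pairing only the
jump rates differ, by at most `D_Ψ ‖σ - σ'‖_tv`, and `σ` has mass one. In the second the reset term
`f 0 - f x` contributes `f 0 ⟨σ - σ', 1⟩ - ⟨σ - σ', f⟩`, where the first part vanishes because both
measures have mass one, while the jump term is bounded by `β ‖Ψ‖_∞ ‖∇₁ f‖_∞ ∑ |σ k - σ' k|`.
-/

/-- The paper's `Ω_σ f` is `generator β (Ψ σ) f`. -/
def generator (β : ℝ) (ψ f : ℕ → ℝ) (x : ℕ) : ℝ :=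
  β * ψ x * (f (x + 1) - f x) + (f 0 - f x)

lemma summable_of_tsum_ne_zero {ι α : Type*} [AddCommMonoid α] [TopologicalSpace α] {g : ι → α}
    (h : ∑' i, g i ≠ 0) : Summable g :=
  not_not.1 fun hg => h (tsum_eq_zero_of_not_summable hg)

lemma abs_jump_mul_le {β ψ d w M L : ℝ} (hψ : |ψ| ≤ M) (hd : |d| ≤ L) :
    |β * ψ * d * w| ≤ |β| * M * L * |w| := by
  have hM : 0 ≤ M := (abs_nonneg ψ).trans hψ
  rw [abs_mul, abs_mul, abs_mul]
  gcongr

lemma tsum_mul_sub_tsum_mul {ι : Type*} {a b σ σ' : ι → ℝ} (ha : Summable fun x => a x * σ x)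
    (hb : Summable fun x => b x * σ x) (hb' : Summable fun x => b x * σ' x) :
    (∑' x, a x * σ x) - ∑' x, b x * σ' x
      = (∑' x, (a x - b x) * σ x) + ∑' x, b x * (σ x - σ' x) := by
  have hab : Summable fun x => (a x - b x) * σ x := (ha.sub hb).congr fun x => by ring
  have hbb : Summable fun x => b x * (σ x - σ' x) := (hb.sub hb').congr fun x => by ring
  rw [← ha.tsum_sub hb', ← hab.tsum_add hbb]
  exact tsum_congr fun x => by ring

lemma abs_tsum_le_of_abs_le {ι : Type*} {g w : ι → ℝ} (hw : Summable w) (h : ∀ i, |g i| ≤ w i) :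
    |∑' i, g i| ≤ ∑' i, w i :=
  tsum_of_norm_bounded (f := g) hw.hasSum h

section

variable {β M L : ℝ} {ψ φ f σ σ' : ℕ → ℝ}

lemma summable_generator_mul (hψ : ∀ x, |ψ x| ≤ M) (hL : ∀ x, |f (x + 1) - f x| ≤ L)
    (hσ : Summable σ) (hfσ : Summable fun x => f x * σ x) :
    Summable fun x => generator β ψ f x * σ x := by
  have hjump : Summable fun x => β * ψ x * (f (x + 1) - f x) * σ x :=
    .of_norm_bounded (hσ.abs.mul_left (|β| * M * L)) fun x => abs_jump_mul_le (hψ x) (hL x)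
  refine (hjump.add ((hσ.mul_left (f 0)).sub hfσ)).congr fun x => ?_
  simp only [generator]
  ring

lemma abs_tsum_generator_sub_generator_mul_le {δ : ℝ} (hψφ : ∀ x, |ψ x - φ x| ≤ δ)
    (hL : ∀ x, |f (x + 1) - f x| ≤ L) (hσ0 : ∀ x, 0 ≤ σ x) (hσ : Summable σ) :
    |∑' x, (generator β ψ f x - generator β φ f x) * σ x| ≤ |β| * δ * L * ∑' x, σ x := by
  have hdiff : ∀ x, (generator β ψ f x - generator β φ f x) * σ x
      = β * (ψ x - φ x) * (f (x + 1) - f x) * σ x := fun x => by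
    simp only [generator]
    ring
  simp only [hdiff, ← tsum_mul_left]
  refine abs_tsum_le_of_abs_le (hσ.mul_left _) fun x => ?_
  have hx := abs_jump_mul_le (β := β) (w := σ x) (hψφ x) (hL x)
  rwa [abs_of_nonneg (hσ0 x)] at hx

lemma abs_tsum_generator_mul_sub_le (hψ : ∀ x, |ψ x| ≤ M) (hL : ∀ x, |f (x + 1) - f x| ≤ L)
    (hσ : Summable σ) (hσ' : Summable σ') (hmass : ∑' x, σ x = ∑' x, σ' x)
    (hfσ : Summable fun x => f x * σ x) (hfσ' : Summable fun x => f x * σ' x) :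
    |∑' x, generator β ψ f x * (σ x - σ' x)|
      ≤ |β| * M * L * ∑' x, |σ x - σ' x| + |∑' x, f x * (σ x - σ' x)| := by
  have hd : Summable fun x => σ x - σ' x := hσ.sub hσ'
  have hjump_bound : ∀ x, |β * ψ x * (f (x + 1) - f x) * (σ x - σ' x)|
      ≤ |β| * M * L * |σ x - σ' x| := fun x => abs_jump_mul_le (hψ x) (hL x)
  have hjump : Summable fun x => β * ψ x * (f (x + 1) - f x) * (σ x - σ' x) :=
    .of_norm_bounded (hd.abs.mul_left _) hjump_bound
  have hfd : Summable fun x => f x * (σ x - σ' x) :=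
    (hfσ.sub hfσ').congr fun x => by ring
  have hmass_diff : ∑' x, (σ x - σ' x) = 0 := by rw [hσ.tsum_sub hσ', hmass, sub_self]
  have hsplit : ∑' x, generator β ψ f x * (σ x - σ' x)
      = (∑' x, β * ψ x * (f (x + 1) - f x) * (σ x - σ' x))
        + f 0 * ∑' x, (σ x - σ' x) - ∑' x, f x * (σ x - σ' x) := by
    rw [← tsum_mul_left, ← hjump.tsum_add (hd.mul_left _),
      ← (hjump.add (hd.mul_left _)).tsum_sub hfd]
    exact tsum_congr fun x => by simp only [generator]; ring
  rw [hsplit, hmass_diff, mul_zero, add_zero, ← tsum_mul_left]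
  refine (abs_sub _ _).trans (add_le_add_left ?_ _)
  exact abs_tsum_le_of_abs_le (hd.abs.mul_left _) hjump_bound

end

/-- Lipschitz-type estimate for the generator
`Ω_σ f (x) = β Ψ(σ,x)(f(x+1) - f(x)) + (f 0 - f x)` of the McKean-Vlasov process:
`|⟨σ, Ω_σ f⟩ - ⟨σ', Ω_{σ'} f⟩| ≤ 2 β ‖∇₁f‖_∞ (‖Ψ‖_∞ + D_Ψ) ‖σ - σ'‖_tv + |⟨σ - σ', f⟩|`.
Probability distributions on `ℕ` are represented as nonnegative functions summing to `1`,
and `‖σ - σ'‖_tv = (1/2) ∑ |σ(k) - σ'(k)|`. -/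
theorem generator_lipschitz_estimate (β : ℝ) (hβ : 0 < β)
    (Ψ : (ℕ → ℝ) → ℕ → ℝ) (MΨ DΨ : ℝ)
    (hbound : ∀ σ x, 0 ≤ Ψ σ x ∧ Ψ σ x ≤ MΨ)
    (hLip : ∀ σ σ' : ℕ → ℝ, ∀ l, (∀ n, 0 ≤ σ n) → (∀ n, 0 ≤ σ' n) →
      (∑' n, σ n) = 1 → (∑' n, σ' n) = 1 →
      |Ψ σ l - Ψ σ' l| ≤ DΨ * ((1 / 2) * ∑' k, |σ k - σ' k|))
    (f : ℕ → ℝ) (L : ℝ) (hL : ∀ x, |f (x + 1) - f x| ≤ L)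
    (σ σ' : ℕ → ℝ) (hσ : ∀ n, 0 ≤ σ n) (hσ' : ∀ n, 0 ≤ σ' n)
    (hσ1 : (∑' n, σ n) = 1) (hσ'1 : (∑' n, σ' n) = 1)
    (hfσ : Summable (fun k => f k * σ k)) (hfσ' : Summable (fun k => f k * σ' k)) :
    |(∑' x, (β * Ψ σ x * (f (x + 1) - f x) + (f 0 - f x)) * σ x)
        - (∑' x, (β * Ψ σ' x * (f (x + 1) - f x) + (f 0 - f x)) * σ' x)|
      ≤ 2 * β * L * (MΨ + DΨ) * ((1 / 2) * ∑' k, |σ k - σ' k|)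
        + |∑' x, f x * (σ x - σ' x)| := by
  have hs : Summable σ := summable_of_tsum_ne_zero (hσ1 ▸ one_ne_zero)
  have hs' : Summable σ' := summable_of_tsum_ne_zero (hσ'1 ▸ one_ne_zero)
  have hΨ : ∀ τ x, |Ψ τ x| ≤ MΨ := fun τ x =>
    (abs_of_nonneg (hbound τ x).1).trans_le (hbound τ x).2
  have hrates := fun x => hLip σ σ' x hσ hσ' hσ1 hσ'1
  have hfirst := abs_tsum_generator_sub_generator_mul_le (β := β) hrates hL hσ hs
  have hsecond := abs_tsum_generator_mul_sub_le (β := β) (hΨ σ') hL hs hs'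
    (hσ1.trans hσ'1.symm) hfσ hfσ'
  rw [hσ1, abs_of_pos hβ] at hfirst
  rw [abs_of_pos hβ] at hsecond
  have hjump_nonneg : 0 ≤ β * (DΨ * ((1 / 2) * ∑' k, |σ k - σ' k|)) * L :=
    mul_nonneg (mul_nonneg hβ.le ((abs_nonneg _).trans (hrates 0))) ((abs_nonneg _).trans (hL 0))
  change |(∑' x, generator β (Ψ σ) f x * σ x) - ∑' x, generator β (Ψ σ') f x * σ' x| ≤ _
  rw [tsum_mul_sub_tsum_mul (summable_generator_mul (hΨ σ) hL hs hfσ)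
    (summable_generator_mul (hΨ σ') hL hs hfσ) (summable_generator_mul (hΨ σ') hL hs' hfσ')]
  refine (abs_add_le _ _).trans ?_
  linarith
end

section
/- Fix $\beta > 0$ and a bounded function $W: \mathbb{N} \to [c, C]$ with $0 < c \le C$. Then the equation $\beta = \sum_{n=0}^{\infty}\prod_{k=0}^{n}\frac{\beta W(k)}{\gamma + \beta W(k)}$ has a unique solution $\gamma = \gamma_\beta \in (0,\infty)$. -/
/-!
Write `a k = β W k`. Each factor `a k / (γ + a k)` lies between `β c / (γ + β c)` and
`β C / (γ + β C)`, and `∑ₙ rⁿ⁺¹ = r / (1 - r)` turns these geometric bounds into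
`β c / γ ≤ F γ ≤ β C / γ` for the right-hand side `F γ`. Hence `F c ≥ β ≥ F C`, and `F` is
continuous (uniformly summable on `[c, ∞)`) and strictly decreasing, so the intermediate
value theorem gives exactly one solution, in `[c, C]`.
-/

open Finset Set

lemma div_add_le_div_add {γ₀ γ x M : ℝ} (hγ₀ : 0 < γ₀) (hγ : γ₀ ≤ γ) (hx : 0 ≤ x)
    (hxM : x ≤ M) : x / (γ + x) ≤ M / (γ₀ + M) := by
  rw [div_le_div_iff₀ (by linarith) (by linarith)]
  nlinarith [mul_le_mul hxM hγ hγ₀.le (hx.trans hxM)]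

lemma hasSum_div_add_pow_succ {γ x : ℝ} (hγ : 0 < γ) (hx : 0 < x) :
    HasSum (fun n : ℕ => (x / (γ + x)) ^ (n + 1)) (x / γ) := by
  have hr : x / (γ + x) < 1 := (div_lt_one (by linarith)).2 (by linarith)
  have h := (hasSum_geometric_of_lt_one (by positivity) hr).mul_left (x / (γ + x))
  have hγx : 1 - x / (γ + x) = γ / (γ + x) := by field_simp; ring
  simp only [hγx, ← pow_succ'] at h
  rwa [inv_div, div_mul_div_cancel₀ (by positivity)] at h

noncomputable def fixedPointSum (a : ℕ → ℝ) (γ : ℝ) : ℝ :=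
  ∑' n : ℕ, ∏ k ∈ range (n + 1), a k / (γ + a k)

namespace fixedPointSum

variable {a : ℕ → ℝ} {m M : ℝ}

lemma prod_pos (hm : 0 < m) (ha : ∀ k, a k ∈ Icc m M) {γ : ℝ} (hγ : 0 < γ) (n : ℕ) :
    0 < ∏ k ∈ range (n + 1), a k / (γ + a k) :=
  Finset.prod_pos fun k _ => have := hm.trans_le (ha k).1; by positivity

lemma prod_le_pow (hm : 0 < m) (ha : ∀ k, a k ∈ Icc m M) {γ₀ γ : ℝ} (hγ₀ : 0 < γ₀)
    (hγ : γ₀ ≤ γ) (n : ℕ) :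
    ∏ k ∈ range (n + 1), a k / (γ + a k) ≤ (M / (γ₀ + M)) ^ (n + 1) := by
  refine (prod_le_prod (fun k _ => ?_) fun k _ =>
    div_add_le_div_add hγ₀ hγ (hm.trans_le (ha k).1).le (ha k).2).trans_eq
      (by rw [prod_const, card_range])
  have := hm.trans_le (ha k).1
  have := hγ₀.trans_le hγ
  positivity

lemma pow_le_prod (hm : 0 < m) (ha : ∀ k, a k ∈ Icc m M) {γ : ℝ} (hγ : 0 < γ) (n : ℕ) :
    (m / (γ + m)) ^ (n + 1) ≤ ∏ k ∈ range (n + 1), a k / (γ + a k) := by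
  refine (prod_le_prod (fun _ _ => by positivity) fun k _ =>
    div_add_le_div_add hγ le_rfl hm.le (ha k).1).trans_eq' (by rw [prod_const, card_range])

lemma summable (hm : 0 < m) (ha : ∀ k, a k ∈ Icc m M) {γ : ℝ} (hγ : 0 < γ) :
    Summable fun n : ℕ => ∏ k ∈ range (n + 1), a k / (γ + a k) :=
  (hasSum_div_add_pow_succ hγ (hm.trans_le ((ha 0).1.trans (ha 0).2))).summable.of_nonneg_of_le
    (fun n => (prod_pos hm ha hγ n).le) (prod_le_pow hm ha hγ le_rfl)

lemma le_div (hm : 0 < m) (ha : ∀ k, a k ∈ Icc m M) {γ : ℝ} (hγ : 0 < γ) :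
    fixedPointSum a γ ≤ M / γ :=
  hasSum_le (prod_le_pow hm ha hγ le_rfl) (summable hm ha hγ).hasSum
    (hasSum_div_add_pow_succ hγ (hm.trans_le ((ha 0).1.trans (ha 0).2)))

lemma div_le (hm : 0 < m) (ha : ∀ k, a k ∈ Icc m M) {γ : ℝ} (hγ : 0 < γ) :
    m / γ ≤ fixedPointSum a γ :=
  hasSum_le (pow_le_prod hm ha hγ) (hasSum_div_add_pow_succ hγ hm) (summable hm ha hγ).hasSum

lemma continuousOn_Ici (hm : 0 < m) (ha : ∀ k, a k ∈ Icc m M) {γ₀ : ℝ} (hγ₀ : 0 < γ₀) :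
    ContinuousOn (fixedPointSum a) (Ici γ₀) := by
  have hM : 0 < M := hm.trans_le ((ha 0).1.trans (ha 0).2)
  rw [continuousOn_iff_continuous_domRestrict]
  refine continuous_tsum (fun n => ?_) (hasSum_div_add_pow_succ hγ₀ hM).summable fun n γ => ?_
  · refine continuous_finsetProd _ fun k _ =>
      continuous_const.div (continuous_subtype_val.add continuous_const) fun γ => ?_
    have := hm.trans_le (ha k).1
    have : 0 < (γ : ℝ) := hγ₀.trans_le γ.2
    positivity
  · have hγ : 0 < (γ : ℝ) := hγ₀.trans_le γ.2
    rw [Real.norm_of_nonneg (prod_pos hm ha hγ n).le]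
    exact prod_le_pow hm ha hγ₀ γ.2 n

lemma strictAntiOn (hm : 0 < m) (ha : ∀ k, a k ∈ Icc m M) :
    StrictAntiOn (fixedPointSum a) (Ioi 0) := by
  intro γ₁ hγ₁ γ₂ hγ₂ h
  have hγ₁ : (0 : ℝ) < γ₁ := hγ₁
  have hγ₂ : (0 : ℝ) < γ₂ := hγ₂
  have hpos : ∀ k, 0 < a k := fun k => hm.trans_le (ha k).1
  have factor_lt : ∀ k, a k / (γ₂ + a k) < a k / (γ₁ + a k) := fun k =>
    div_lt_div_of_pos_left (hpos k) (by linarith [hpos k]) (by linarith)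
  refine (summable hm ha hγ₂).tsum_lt_tsum (i := 0) (fun n => ?_) ?_ (summable hm ha hγ₁)
  · exact prod_le_prod (fun k _ => have := hpos k; by positivity) fun k _ => (factor_lt k).le
  · simpa using factor_lt 0

end fixedPointSum

/-- The fixed point equation `β = ∑_{n≥0} ∏_{k=0}^{n} (β W(k)) / (γ + β W(k))`
characterizing the invariant distribution of the random weighted algorithm has a
unique positive solution `γ`. -/
theorem randomWeighted_fixed_point_unique (β : ℝ) (hβ : 0 < β) (c C : ℝ)
    (hc : 0 < c) (hcC : c ≤ C) (W : ℕ → ℝ) (hW : ∀ k, W k ∈ Set.Icc c C) :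
    ∃! γ : ℝ, 0 < γ ∧
      β = ∑' n : ℕ, ∏ k ∈ Finset.range (n + 1), (β * W k) / (γ + β * W k) := by
  have hC : 0 < C := hc.trans_le hcC
  have hβc : 0 < β * c := mul_pos hβ hc
  have ha : ∀ k, β * W k ∈ Icc (β * c) (β * C) := fun k =>
    ⟨mul_le_mul_of_nonneg_left (hW k).1 hβ.le, mul_le_mul_of_nonneg_left (hW k).2 hβ.le⟩
  have hFC : fixedPointSum (β * W ·) C ≤ β :=
    (fixedPointSum.le_div hβc ha hC).trans_eq (by field_simp)
  have hFc : β ≤ fixedPointSum (β * W ·) c :=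
    (fixedPointSum.div_le hβc ha hc).trans_eq' (by field_simp)
  obtain ⟨γ, hγ, hFγ⟩ := intermediate_value_Icc' hcC
    ((fixedPointSum.continuousOn_Ici hβc ha hc).mono Icc_subset_Ici_self) ⟨hFC, hFc⟩
  have hγ₀ : 0 < γ := hc.trans_le hγ.1
  exact ⟨γ, ⟨hγ₀, hFγ.symm⟩, fun γ' ⟨hγ', hFγ'⟩ =>
    (fixedPointSum.strictAntiOn hβc ha).injOn hγ' hγ₀ (hFγ'.symm.trans hFγ.symm)⟩
end

section
/- Fix $d \ge 2$ and $\beta \ge 1/d$. Let $(\xi_n)$ satisfy $\xi_0 = 1$, $\xi_n = \beta(\xi_{n-1}^d - \xi_n^d)$, $0 \le \xi_n \le \xi_{n-1} \le 1$, and let $(\eta_n(t))_{t\ge 0}$ be differentiable functions with values in $[0,1]$, non-increasing in $n$, with $\eta_n'(t) = \beta(\eta_{n-1}(t)^d - \eta_n(t)^d) - \eta_n(t)$ for $n \ge 1$ and $\eta_0(t) = 1$. Then for all $n \ge 1$ and $t \ge 0$: $e^t(\eta_n(t) - \xi_n)^2 \le (1 + (d\beta)^2)\sum_{k=0}^{n-2}\frac{(d\beta)^{2k}t^k}{k!}$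 (with the convention that for $n=1$ the right-hand side is $1$, i.e., $(\eta_1(t)-\xi_1)^2 \le e^{-t}$). -/
/-!
Write `eₙ = ηₙ - ξₙ`. Since `ξ` is a zero of the drift and `x ↦ x ^ d` is monotone and
`d`-Lipschitz on `[0, 1]`, the error satisfies `eₙ eₙ' ≤ dβ |eₙ₋₁| |eₙ| - eₙ²`. As `e₀ = 0`, this
makes `e^{2t} e₁²` non-increasing, so `e^t e₁² ≤ e^{-t}`; for `n ≥ 2`, AM-GM turns it into
`(e^t eₙ²)' ≤ (dβ)² e^t eₙ₋₁²`, and integrating this chain from `e^t e₁² ≤ e^{-t}` produces the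
truncated exponential series.
-/

open Real Set Finset

section LinearOrderedCommRing

variable {α : Type*} [CommRing α] [LinearOrder α] [IsStrictOrderedRing α]

lemma abs_pow_sub_pow_le_of_mem_Icc {x y : α} (hx : x ∈ Icc (0 : α) 1) (hy : y ∈ Icc (0 : α) 1)
    (d : ℕ) : |x ^ d - y ^ d| ≤ d * |x - y| := by
  have hmax : max |x| |y| ^ (d - 1) ≤ 1 := by
    refine pow_le_one₀ (le_max_of_le_left (abs_nonneg x)) (max_le ?_ ?_)
    · rw [abs_of_nonneg hx.1]; exact hx.2
    · rw [abs_of_nonneg hy.1]; exact hy.2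
  calc |x ^ d - y ^ d| ≤ |x - y| * d * max |x| |y| ^ (d - 1) := abs_pow_sub_pow_le ..
    _ ≤ |x - y| * d * 1 := by gcongr
    _ = d * |x - y| := by ring

lemma sub_mul_pow_sub_pow_nonneg {x y : α} (hx : 0 ≤ x) (hy : 0 ≤ y) (d : ℕ) :
    0 ≤ (x - y) * (x ^ d - y ^ d) := by
  rcases le_total y x with h | h
  · exact mul_nonneg (sub_nonneg.2 h) (sub_nonneg.2 (pow_le_pow_left₀ hy h d))
  · exact mul_nonneg_of_nonpos_of_nonpos (sub_nonpos.2 h) (sub_nonpos.2 (pow_le_pow_left₀ hx h d))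

lemma sq_sub_le_one_of_mem_Icc {x y : α} (hx : x ∈ Icc (0 : α) 1) (hy : y ∈ Icc (0 : α) 1) :
    (x - y) ^ 2 ≤ 1 := by
  nlinarith [hx.1, hx.2, hy.1, hy.2]

end LinearOrderedCommRing

/-- `ηₙ' = tailDrift d β ηₙ₋₁ ηₙ`, and the invariant sequence satisfies
`tailDrift d β ξₙ₋₁ ξₙ = 0`. -/
def tailDrift (d : ℕ) (β x y : ℝ) : ℝ := β * (x ^ d - y ^ d) - y

lemma sub_mul_tailDrift_sub_le {d : ℕ} {β a b p q : ℝ} (hβ : 0 ≤ β) (ha : a ∈ Icc (0 : ℝ) 1)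
    (hp : p ∈ Icc (0 : ℝ) 1) (hb : 0 ≤ b) (hq : 0 ≤ q) :
    (b - q) * (tailDrift d β a b - tailDrift d β p q) ≤
      d * β * |a - p| * |b - q| - (b - q) ^ 2 := by
  have hmono := sub_mul_pow_sub_pow_nonneg hb hq d
  have hlip : (b - q) * (a ^ d - p ^ d) ≤ |b - q| * (d * |a - p|) := by
    calc (b - q) * (a ^ d - p ^ d) ≤ |b - q| * |a ^ d - p ^ d| := abs_mul (b - q) _ ▸ le_abs_self _
      _ ≤ |b - q| * (d * |a - p|) := by gcongr; exact abs_pow_sub_pow_le_of_mem_Icc ha hp d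
  unfold tailDrift
  nlinarith [mul_le_mul_of_nonneg_left hlip hβ, mul_nonneg hβ hmono]

lemma hasDerivAt_exp_mul_mul_sub_sq {v : ℝ → ℝ} {v' : ℝ} (r q : ℝ) {t : ℝ}
    (hv : HasDerivAt v v' t) :
    HasDerivAt (fun s => exp (r * s) * (v s - q) ^ 2)
      (exp (r * t) * (r * (v t - q) ^ 2 + 2 * ((v t - q) * v'))) t := by
  have hexp : HasDerivAt (fun s => exp (r * s)) (exp (r * t) * r) t := by
    simpa using ((hasDerivAt_id t).const_mul r).exp
  refine (hexp.mul ((hv.sub_const q).fun_pow 2)).congr_deriv ?_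
  push_cast
  ring

lemma le_of_forall_exists_hasDerivAt_le {f g g' : ℝ → ℝ}
    (hf : ∀ s, 0 ≤ s → ∃ f', HasDerivAt f f' s ∧ f' ≤ g' s)
    (hg : ∀ s, 0 ≤ s → HasDerivAt g (g' s) s) (h0 : f 0 ≤ g 0) {t : ℝ} (ht : 0 ≤ t) :
    f t ≤ g t := by
  choose! f' hf' hle using hf
  refine image_le_of_deriv_right_le_deriv_boundary (a := 0) (b := t) ?_
    (fun s hs => (hf' s hs.1).hasDerivWithinAt) h0 ?_ (fun s hs => (hg s hs.1).hasDerivWithinAt)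
    (fun s hs => hle s hs.1) ⟨ht, le_rfl⟩
  · exact fun s hs => (hf' s hs.1).continuousAt.continuousWithinAt
  · exact fun s hs => (hg s hs.1).continuousAt.continuousWithinAt

lemma hasDerivAt_sum_range_pow_mul_pow_div_factorial (c : ℝ) (m : ℕ) (t : ℝ) :
    HasDerivAt (fun s => ∑ k ∈ range (m + 1), c ^ k * s ^ k / k.factorial)
      (c * ∑ k ∈ range m, c ^ k * t ^ k / k.factorial) t := by
  have h := HasDerivAt.fun_sum (u := range (m + 1))
    (fun k _ => ((hasDerivAt_pow k t).const_mul (c ^ k)).div_const (k.factorial : ℝ))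
  refine h.congr_deriv ?_
  rw [sum_range_succ', mul_sum]
  simp only [Nat.cast_zero, zero_mul, mul_zero, zero_div, add_zero, Nat.add_sub_cancel]
  refine sum_congr rfl fun k _ => ?_
  rw [Nat.factorial_succ]
  push_cast
  field_simp
  ring

lemma exp_two_mul_mul_sq_sub_le {d : ℕ} {β p q : ℝ} {v : ℝ → ℝ} (hβ : 0 ≤ β)
    (hp : p ∈ Icc (0 : ℝ) 1) (hq : 0 ≤ q) (hpq : tailDrift d β p q = 0)
    (hv : ∀ s, 0 ≤ s → 0 ≤ v s) (hv' : ∀ s, 0 ≤ s → HasDerivAt v (tailDrift d β p (v s)) s)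
    {t : ℝ} (ht : 0 ≤ t) : exp (2 * t) * (v t - q) ^ 2 ≤ (v 0 - q) ^ 2 := by
  refine le_of_forall_exists_hasDerivAt_le (g := fun _ => (v 0 - q) ^ 2) (g' := 0)
    (fun s hs => ⟨_, hasDerivAt_exp_mul_mul_sub_sq 2 q (hv' s hs), ?_⟩)
    (fun s _ => hasDerivAt_const s _) (by simp) ht
  have h := sub_mul_tailDrift_sub_le (d := d) hβ hp hp (hv s hs) hq
  rw [hpq, sub_zero, sub_self, abs_zero, mul_zero, zero_mul, zero_sub] at h
  exact mul_nonpos_of_nonneg_of_nonpos (exp_nonneg _) (by linarith)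

lemma exists_hasDerivAt_exp_mul_sq_sub_le {d : ℕ} {β a p q s : ℝ} {v : ℝ → ℝ} (hβ : 0 ≤ β)
    (ha : a ∈ Icc (0 : ℝ) 1) (hp : p ∈ Icc (0 : ℝ) 1) (hvs : 0 ≤ v s) (hq : 0 ≤ q)
    (hpq : tailDrift d β p q = 0) (hv' : HasDerivAt v (tailDrift d β a (v s)) s) :
    ∃ D, HasDerivAt (fun r => exp r * (v r - q) ^ 2) D s ∧
      D ≤ (d * β) ^ 2 * (exp s * (a - p) ^ 2) := by
  have hD := hasDerivAt_exp_mul_mul_sub_sq 1 q hv'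
  simp only [one_mul] at hD
  refine ⟨_, hD, ?_⟩
  have h := sub_mul_tailDrift_sub_le (d := d) hβ ha hp hvs hq
  rw [hpq, sub_zero] at h
  have key : (v s - q) ^ 2 + 2 * ((v s - q) * tailDrift d β a (v s)) ≤
      (d * β) ^ 2 * (a - p) ^ 2 := by
    nlinarith [sq_nonneg (d * β * |a - p| - |v s - q|), sq_abs (a - p), sq_abs (v s - q)]
  nlinarith [mul_le_mul_of_nonneg_left key (exp_nonneg s)]

lemma le_mul_sum_of_exists_hasDerivAt_le {F : ℕ → ℝ → ℝ} {c : ℝ} (hc : 0 ≤ c)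
    (hF0 : ∀ t, 0 ≤ t → F 0 t ≤ exp (-t)) (hinit : ∀ n, F (n + 1) 0 ≤ 1)
    (hderiv : ∀ n s, 0 ≤ s → ∃ D, HasDerivAt (F (n + 1)) D s ∧ D ≤ c * F n s)
    (n : ℕ) {t : ℝ} (ht : 0 ≤ t) :
    F (n + 1) t ≤ (1 + c) * ∑ k ∈ range (n + 1), c ^ k * t ^ k / k.factorial := by
  induction n generalizing t with
  | zero =>
    have hg (s : ℝ) : HasDerivAt (fun s => 1 + c - c * exp (-s)) (c * exp (-s)) s := by
      simpa using (((hasDerivAt_neg s).exp).const_mul c).const_sub (1 + c)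
    have h : F 1 t ≤ 1 + c - c * exp (-t) := le_of_forall_exists_hasDerivAt_le
      (fun s hs => ?_) (fun s _ => hg s) (by simpa using hinit 0) ht
    · simpa using h.trans (sub_le_self _ (mul_nonneg hc (exp_nonneg _)))
    · obtain ⟨D, hD, hle⟩ := hderiv 0 s hs
      exact ⟨D, hD, hle.trans (mul_le_mul_of_nonneg_left (hF0 s hs) hc)⟩
  | succ n ih =>
    refine le_of_forall_exists_hasDerivAt_le (fun s hs => ?_)
      (fun s _ => (hasDerivAt_sum_range_pow_mul_pow_div_factorial c (n + 1) s).const_mul (1 + c))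
      ?_ ht
    · obtain ⟨D, hD, hle⟩ := hderiv (n + 1) s hs
      refine ⟨D, hD, hle.trans ?_⟩
      nlinarith [mul_le_mul_of_nonneg_left (ih hs) hc]
    · simpa [sum_range_succ'] using (hinit (n + 1)).trans (le_add_of_nonneg_right hc)

theorem power_of_choices_stability_general (d : ℕ) (β : ℝ) (hβ : 1 / d ≤ β)
    (ξ : ℕ → ℝ) (hξ0 : ξ 0 = 1)
    (hξrec : ∀ n : ℕ, 1 ≤ n → ξ n = β * ((ξ (n - 1)) ^ d - (ξ n) ^ d))
    (hξnonneg : ∀ n, 0 ≤ ξ n) (hξle : ∀ n, ξ n ≤ 1)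
    (η : ℕ → ℝ → ℝ)
    (hη0 : ∀ t, η 0 t = 1)
    (hηrange : ∀ n t, 0 ≤ t → η n t ∈ Set.Icc (0 : ℝ) 1)
    (hηderiv : ∀ n : ℕ, 1 ≤ n → ∀ t : ℝ, 0 ≤ t →
      HasDerivAt (η n) (β * ((η (n - 1) t) ^ d - (η n t) ^ d) - η n t) t) :
    (∀ t : ℝ, 0 ≤ t → (η 1 t - ξ 1) ^ 2 ≤ Real.exp (-t)) ∧
    (∀ n : ℕ, 2 ≤ n → ∀ t : ℝ, 0 ≤ t →
      Real.exp t * (η n t - ξ n) ^ 2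
        ≤ (1 + ((d : ℝ) * β) ^ 2) *
          ∑ k ∈ Finset.range (n - 1), ((d : ℝ) * β) ^ (2 * k) * t ^ k / k.factorial) := by
  have hβ0 : 0 ≤ β := le_trans (by positivity) hβ
  have hξ (n : ℕ) : ξ n ∈ Icc (0 : ℝ) 1 := ⟨hξnonneg n, hξle n⟩
  have hfix (n : ℕ) : tailDrift d β (ξ n) (ξ (n + 1)) = 0 := by
    have h := hξrec (n + 1) n.succ_pos
    rw [Nat.add_sub_cancel] at h
    rw [tailDrift, ← h, sub_self]
  have hode (n : ℕ) (s : ℝ) (hs : 0 ≤ s) :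
      HasDerivAt (η (n + 1)) (tailDrift d β (η n s) (η (n + 1) s)) s :=
    hηderiv (n + 1) n.succ_pos s hs
  have hinit (n : ℕ) : (η n 0 - ξ n) ^ 2 ≤ 1 := sq_sub_le_one_of_mem_Icc (hηrange n 0 le_rfl) (hξ n)
  have hfirst (t : ℝ) (ht : 0 ≤ t) : exp t * (η 1 t - ξ 1) ^ 2 ≤ exp (-t) := by
    have h := exp_two_mul_mul_sq_sub_le hβ0 (hξ 0) (hξnonneg 1) (hfix 0)
      (fun s hs => (hηrange 1 s hs).1) (fun s hs => by simpa [hη0, hξ0] using hode 0 s hs) ht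
    calc exp t * (η 1 t - ξ 1) ^ 2 = exp (-t) * (exp (2 * t) * (η 1 t - ξ 1) ^ 2) := by
          rw [← mul_assoc, ← exp_add]; ring_nf
      _ ≤ exp (-t) := mul_le_of_le_one_right (exp_nonneg _) (h.trans (hinit 1))
  have hchain := le_mul_sum_of_exists_hasDerivAt_le
    (F := fun n t => exp t * (η (n + 1) t - ξ (n + 1)) ^ 2) (sq_nonneg ((d : ℝ) * β)) hfirst
    (fun n => by simpa using hinit (n + 2))
    (fun n s hs => exists_hasDerivAt_exp_mul_sq_sub_le hβ0 (hηrange (n + 1) s hs) (hξ (n + 1))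
      (hηrange (n + 2) s hs).1 (hξnonneg (n + 2)) (hfix (n + 1)) (hode (n + 1) s hs))
  refine ⟨fun t ht => (le_mul_of_one_le_left (sq_nonneg _) (one_le_exp ht)).trans (hfirst t ht),
    fun n hn t ht => ?_⟩
  obtain ⟨m, rfl⟩ := Nat.exists_eq_add_of_le' hn
  simpa [pow_mul] using hchain m ht

/-- Quantitative stability estimate for the tail probabilities of the power of
`d`-choices McKean-Vlasov process towards the invariant tail sequence `(ξ n)`. -/
theorem power_of_choices_stability (d : ℕ) (hd : 2 ≤ d) (β : ℝ) (hβ : 1 / d ≤ β)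
    (ξ : ℕ → ℝ) (hξ0 : ξ 0 = 1)
    (hξrec : ∀ n : ℕ, 1 ≤ n → ξ n = β * ((ξ (n - 1)) ^ d - (ξ n) ^ d))
    (hξnonneg : ∀ n, 0 ≤ ξ n) (hξmono : ∀ n, ξ (n + 1) ≤ ξ n) (hξle : ∀ n, ξ n ≤ 1)
    (η : ℕ → ℝ → ℝ)
    (hη0 : ∀ t, η 0 t = 1)
    (hηrange : ∀ n t, 0 ≤ t → η n t ∈ Set.Icc (0 : ℝ) 1)
    (hηmono : ∀ n t, 0 ≤ t → η (n + 1) t ≤ η n t)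
    (hηderiv : ∀ n : ℕ, 1 ≤ n → ∀ t : ℝ, 0 ≤ t →
      HasDerivAt (η n) (β * ((η (n - 1) t) ^ d - (η n t) ^ d) - η n t) t) :
    (∀ t : ℝ, 0 ≤ t → (η 1 t - ξ 1) ^ 2 ≤ Real.exp (-t)) ∧
    (∀ n : ℕ, 2 ≤ n → ∀ t : ℝ, 0 ≤ t →
      Real.exp t * (η n t - ξ n) ^ 2
        ≤ (1 + ((d : ℝ) * β) ^ 2) *
          ∑ k ∈ Finset.range (n - 1), ((d : ℝ) * β) ^ (2 * k) * t ^ k / k.factorial) :=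
  power_of_choices_stability_general d β hβ ξ hξ0 hξrec hξnonneg hξle η hη0 hηrange hηderiv
end
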